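/- Let z, w ∈ ℂ \ {0, 1, −1} with w ∉ {z, 1/z}, and let a, b, p, q ∈ ℂ. Define the function B on pairs by B(ζ, ω; A, B', P', Q') := i(P' − Q') [ ((ω+ζ)/(ω−ζ))(A − B') + A·B' − 1 ], and set B₁ := B(z, w; a, b, p, q), B₂ := B(1/z, w; −a, b, p, q), B₃ := B(z, 1/w; a, −b, p, q), B₄ := B(1/z, 1/w; −a, −b, p, q). Set λ := z + 1/z, ξ := w + 1/w, m_λ := a/(z − 1/z), m_ξ := b/(w − 1/w), n_λ := −i p, n_ξ := −i q. Then (B₁ − B₂ − B₃ + B₄) / (4 (z − 1/z)(w − 1/w)) = (n_λ − n_ξ) · [ (m_λ − m_ξ)/(λ − ξ) − m_λ m_ξ ]. -/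

import Mathlib

/-!
Inverting an argument of the kernel `K(ζ, ω) = (ω + ζ)/(ω − ζ)` gives `K(1/z, 1/w) = −K(z, w)` and
`K(z, 1/w) = −K(1/z, w) = −(wz + 1)/(wz − 1)`, so in `B₁ − B₂ − B₃ + B₄` the constant terms cancel,
the products add up to `4ab`, and the kernels to `2K(z, w)(a − b) + 2K(1/z, w)(a + b)`.
With `z − 1/z = (z² − 1)/z` and `λ − ξ = (z − w)(zw − 1)/(zw)` what remains is an identity of
rational functions in `z, w, a, b`.
-/

open Complex

section Kernel

variable {K : Type*} [Field K]

theorem inv_add_inv_div_inv_sub_inv {ζ ω : K} (hζ : ζ ≠ 0) (hω : ω ≠ 0) :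
    (ω⁻¹ + ζ⁻¹) / (ω⁻¹ - ζ⁻¹) = -((ω + ζ) / (ω - ζ)) := by
  rw [inv_add_inv hω hζ, inv_sub_inv hω hζ, div_div_div_cancel_right₀ (mul_ne_zero hω hζ),
    ← neg_sub, div_neg, add_comm]

theorem add_inv_div_sub_inv {ζ ω : K} (hζ : ζ ≠ 0) :
    (ω + ζ⁻¹) / (ω - ζ⁻¹) = (ω * ζ + 1) / (ω * ζ - 1) := by
  rw [← mul_div_mul_right _ _ hζ, add_mul, sub_mul, inv_mul_cancel₀ hζ]

theorem sub_inv_eq_div {z : K} (hz : z ≠ 0) : z - z⁻¹ = (z ^ 2 - 1) / z := by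
  field_simp

theorem add_inv_sub_add_inv {z w : K} (hz : z ≠ 0) (hw : w ≠ 0) :
    z + z⁻¹ - (w + w⁻¹) = (z - w) * (z * w - 1) / (z * w) := by
  field_simp; ring

end Kernel

noncomputable def hBracket (ζ ω A B P Q : ℂ) : ℂ :=
  I * (P - Q) * ((ω + ζ) / (ω - ζ) * (A - B) + A * B - 1)

theorem hBracket_reflection_sum {z w : ℂ} (a b p q : ℂ) (hz : z ≠ 0) (hw : w ≠ 0)
    (hwz : w - z ≠ 0) (hwz1 : w * z - 1 ≠ 0) :
    hBracket z w a b p q - hBracket z⁻¹ w (-a) b p q - hBracket z w⁻¹ a (-b) p q +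
        hBracket z⁻¹ w⁻¹ (-a) (-b) p q =
      4 * I * (p - q) *
        ((a * z * (w ^ 2 - 1) - b * w * (z ^ 2 - 1)) / ((w - z) * (w * z - 1)) + a * b) := by
  have hleft := add_inv_div_sub_inv (ω := w) hz
  have hright : (w⁻¹ + z) / (w⁻¹ - z) = -((w * z + 1) / (w * z - 1)) := by
    have h := inv_add_inv_div_inv_sub_inv (inv_ne_zero hz) hw
    rwa [inv_inv, hleft] at h
  unfold hBracket
  rw [hleft, hright, inv_add_inv_div_inv_sub_inv hz hw]
  field_simp
  ring

/-- (Proposition 6.2 in algebraic form.) With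
`B(ζ,ω; A,B',P',Q') = i(P'−Q')[((ω+ζ)/(ω−ζ))(A−B') + A·B' − 1]` the `h`-bracket formula,
`B₁ = B(z,w;a,b,p,q)`, `B₂ = B(1/z,w;−a,b,p,q)`, `B₃ = B(z,1/w;a,−b,p,q)`,
`B₄ = B(1/z,1/w;−a,−b,p,q)`, and `λ = z+1/z`, `ξ = w+1/w`, `m_λ = a/(z−1/z)`,
`m_ξ = b/(w−1/w)`, `n_λ = −ip`, `n_ξ = −iq`, one has
`(B₁−B₂−B₃+B₄)/(4(z−1/z)(w−1/w)) = (n_λ−n_ξ)[(m_λ−m_ξ)/(λ−ξ) − m_λ m_ξ]`. -/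
theorem statement19 (z w a b p q : ℂ)
    (hz0 : z ≠ 0) (hz1 : z ≠ 1) (hz1' : z ≠ -1)
    (hw0 : w ≠ 0) (hw1 : w ≠ 1) (hw1' : w ≠ -1)
    (hwz : w ≠ z) (hwz' : w ≠ 1 / z)
    (Bf : ℂ → ℂ → ℂ → ℂ → ℂ → ℂ → ℂ)
    (hBf : ∀ ζ ω A B' P' Q', Bf ζ ω A B' P' Q' =
      Complex.I * (P' - Q') * (((ω + ζ) / (ω - ζ)) * (A - B') + A * B' - 1)) :
    (Bf z w a b p q - Bf (1 / z) w (-a) b p q - Bf z (1 / w) a (-b) p q +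
        Bf (1 / z) (1 / w) (-a) (-b) p q) /
      (4 * (z - 1 / z) * (w - 1 / w)) =
    ((-Complex.I * p) - (-Complex.I * q)) *
      ((a / (z - 1 / z) - b / (w - 1 / w)) / ((z + 1 / z) - (w + 1 / w)) -
        (a / (z - 1 / z)) * (b / (w - 1 / w))) := by
  obtain rfl : Bf = hBracket := by
    funext ζ ω A B' P' Q'
    exact hBf ζ ω A B' P' Q'
  have hz2 : z ^ 2 - 1 ≠ 0 := by
    rw [sub_ne_zero, sq_ne_one_iff]; exact ⟨hz1, hz1'⟩
  have hw2 : w ^ 2 - 1 ≠ 0 := by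
    rw [sub_ne_zero, sq_ne_one_iff]; exact ⟨hw1, hw1'⟩
  have hwz0 : w - z ≠ 0 := sub_ne_zero.mpr hwz
  have hwz1 : w * z - 1 ≠ 0 := fun h ↦
    hwz' (one_div z ▸ eq_inv_of_mul_eq_one_left (sub_eq_zero.mp h))
  simp only [one_div]
  rw [hBracket_reflection_sum a b p q hz0 hw0 hwz0 hwz1, sub_inv_eq_div hz0, sub_inv_eq_div hw0,
    add_inv_sub_add_inv hz0 hw0]
  field_simp
  ring
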